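/- If b > 1 is an integer not a power of 10, then the sequence (b^n) satisfies Benford's Law: the natural density of n such that the first significant digit of b^n equals d is log₁₀(1 + 1/d), for each d ∈ {1,...,9}. -/

import Mathlib

/-!
Write `α = log₁₀ b`. The first digit of `bⁿ` is `d` exactly when the fractional part of `n α`
lies in `[log₁₀ d, log₁₀ (d + 1))`, i.e. when the point `n α` of the circle `ℝ/ℤ` lies on an arc of
length `log₁₀ (1 + 1/d)`. Since `b` is not a power of `10`, `α` is irrational, and Weyl's theorem
says that the orbit of an irrational rotation is equidistributed: the Birkhoff averages of every
continuous function converge to its integral. For the characters `fourier n` this holds because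
`fourier n (x + α) = fourier n α * fourier n x` with `fourier n α ≠ 1`, and the characters span a
dense subspace of `C(ℝ/ℤ, ℂ)`. Equidistribution is the weak convergence of the empirical measures
of the orbit to Lebesgue measure, so by the portmanteau theorem it also gives the visit frequency
of the arc, whose boundary is null.
-/

open Filter Topology MeasureTheory Set Real
open scoped ENNReal BoundedContinuousFunction Finset

section BirkhoffAverage

variable {α : Type*}

theorem birkhoffAverage_smul (R : Type*) {M : Type*} [Field R] [AddCommMonoid M] [Module R M]
    (c : R) (f : α → α) (g : α → M) (n : ℕ) (x : α) :
    birkhoffAverage R f (c • g) n x = c • birkhoffAverage R f g n x := by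
  simp [birkhoffAverage, birkhoffSum, Finset.smul_sum, smul_comm c]

theorem birkhoffAverage_comp (R : Type*) {M : Type*} [DivisionSemiring R] [AddCommMonoid M]
    [Module R M] (f : α → α) (g : α → M) (n : ℕ) (x : α) :
    birkhoffAverage R f (g ∘ f) n x = birkhoffAverage R f g n (f x) := by
  simp [birkhoffAverage, birkhoffSum, ← Function.iterate_succ_apply' f, Function.iterate_succ_apply]

theorem birkhoffSum_add_right_self {M N : Type*} [AddMonoid M] [AddCommMonoid N] (g : M → N)
    (a : M) (n : ℕ) : birkhoffSum (· + a) g n a = ∑ k ∈ Finset.Icc 1 n, g (k • a) := by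
  simp only [birkhoffSum, add_right_iterate, ← succ_nsmul']
  rw [Finset.range_eq_Ico, Finset.sum_Ico_add' (fun k ↦ g (k • a))]
  rfl

theorem birkhoffAverage_add_right_self_indicator {M : Type*} [AddMonoid M] (a : M) (E : Set M)
    [DecidablePred (· ∈ E)] (n : ℕ) :
    birkhoffAverage ℝ (· + a) (E.indicator 1) n a =
      (#{k ∈ Finset.Icc 1 n | k • a ∈ E} : ℝ) / n := by
  rw [birkhoffAverage, birkhoffSum_add_right_self, smul_eq_mul, div_eq_inv_mul,
    Finset.natCast_card_filter]
  congr 1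
  refine Finset.sum_congr rfl fun k _ ↦ ?_
  by_cases hk : k • a ∈ E <;> simp [hk]

variable (𝕜 : Type*) {E : Type*} [RCLike 𝕜] [NormedAddCommGroup E] [NormedSpace 𝕜 E]

theorem norm_birkhoffAverage_le {f : α → α} {g : α → E} {C : ℝ} (hg : ∀ y, ‖g y‖ ≤ C)
    (n : ℕ) (x : α) : ‖birkhoffAverage 𝕜 f g n x‖ ≤ C := by
  rcases eq_or_ne n 0 with rfl | hn
  · simpa using (norm_nonneg _).trans (hg x)
  calc ‖birkhoffAverage 𝕜 f g n x‖
      ≤ (n : ℝ)⁻¹ * ∑ k ∈ Finset.range n, ‖g (f^[k] x)‖ := by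
        rw [birkhoffAverage, norm_smul, norm_inv, RCLike.norm_natCast]
        gcongr
        exact norm_sum_le _ _
    _ ≤ (n : ℝ)⁻¹ * (n * C) := by
        gcongr
        exact (Finset.sum_le_card_nsmul _ _ _ fun k _ ↦ hg _).trans_eq (by simp)
    _ = C := by field_simp

/-- The averages at `x` and at `f x` differ by `O(1/n)`, while `g ∘ f = c • g` makes the second
`c` times the first. -/
theorem tendsto_birkhoffAverage_zero_of_comp_eq_smul {f : α → α} {g : α → E} {c : 𝕜}
    (hg : g ∘ f = c • g) (hc : c ≠ 1) (hb : Bornology.IsBounded (range g)) (x : α) :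
    Tendsto (birkhoffAverage 𝕜 f g · x) atTop (𝓝 0) := by
  have hsub := tendsto_birkhoffAverage_apply_sub_birkhoffAverage' 𝕜 hb f x
  have hshift : ∀ n, birkhoffAverage 𝕜 f g n (f x) - birkhoffAverage 𝕜 f g n x =
      (c - 1) • birkhoffAverage 𝕜 f g n x := fun n ↦ by
    rw [← birkhoffAverage_comp, hg, birkhoffAverage_smul, sub_smul, one_smul]
  simp_rw [hshift] at hsub
  simpa [smul_smul, inv_mul_cancel₀ (sub_ne_zero.2 hc)] using hsub.const_smul (c - 1)⁻¹

variable {X : Type*} [TopologicalSpace X] [CompactSpace X]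

theorem lipschitzWith_birkhoffAverage_continuousMap (f : X → X) (n : ℕ) (x : X) :
    LipschitzWith 1 fun g : C(X, E) ↦ birkhoffAverage 𝕜 f g n x :=
  LipschitzWith.of_dist_le_mul fun g h ↦ by
    have := norm_birkhoffAverage_le 𝕜 (f := f) (g - h).norm_coe_le_norm n x
    rw [ContinuousMap.coe_sub, birkhoffAverage_sub] at this
    simpa [dist_eq_norm] using this

theorem lipschitzWith_integral_continuousMap [MeasurableSpace X] [OpensMeasurableSpace X]
    [NormedSpace ℝ E] (μ : Measure X) [IsProbabilityMeasure μ] :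
    LipschitzWith 1 fun g : C(X, E) ↦ ∫ y, g y ∂μ :=
  LipschitzWith.of_dist_le_mul fun g h ↦ by
    have hint (k : C(X, E)) : Integrable k μ :=
      k.continuous.integrable_of_hasCompactSupport (.of_compactSpace k)
    rw [dist_eq_norm, ← integral_sub (hint g) (hint h)]
    simpa [dist_eq_norm] using
      norm_integral_le_of_norm_le_const (μ := μ) (Eventually.of_forall (g - h).norm_coe_le_norm)

theorem isClosed_setOf_tendsto_birkhoffAverage_integral [MeasurableSpace X]
    [OpensMeasurableSpace X] [NormedSpace ℝ E] (μ : Measure X) [IsProbabilityMeasure μ]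
    (f : X → X) (x : X) :
    IsClosed {g : C(X, E) | Tendsto (birkhoffAverage 𝕜 f g · x) atTop (𝓝 (∫ y, g y ∂μ))} :=
  (LipschitzWith.uniformEquicontinuous _ 1 fun n ↦
    lipschitzWith_birkhoffAverage_continuousMap 𝕜 f n x).equicontinuous.isClosed_setOfPred_tendsto
    (lipschitzWith_integral_continuousMap μ).continuous

end BirkhoffAverage

section EmpiricalMeasure

variable {X : Type*} [MeasurableSpace X]

noncomputable def empiricalMeasure (f : X → X) (x : X) (n : ℕ) : Measure X :=
  (n : ℝ≥0∞)⁻¹ • ∑ k ∈ Finset.range n, Measure.dirac (f^[k] x)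

theorem isProbabilityMeasure_empiricalMeasure (f : X → X) (x : X) {n : ℕ} (hn : n ≠ 0) :
    IsProbabilityMeasure (empiricalMeasure f x n) := by
  constructor
  simp [empiricalMeasure, ENNReal.inv_mul_cancel (Nat.cast_ne_zero.2 hn) (ENNReal.natCast_ne_top n)]

variable [MeasurableSingletonClass X]

theorem integral_empiricalMeasure {E : Type*} [NormedAddCommGroup E] [NormedSpace ℝ E]
    [CompleteSpace E] (f : X → X) (g : X → E) (n : ℕ) (x : X) :
    ∫ y, g y ∂empiricalMeasure f x n = birkhoffAverage ℝ f g n x := by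
  rw [empiricalMeasure, integral_smul_measure, integral_finsetSum_measure]
  · simp [birkhoffAverage, birkhoffSum]
  · exact fun k _ ↦ integrable_dirac enorm_lt_top

theorem measureReal_empiricalMeasure (f : X → X) (s : Set X) (n : ℕ) (x : X) :
    (empiricalMeasure f x n).real s = birkhoffAverage ℝ f (s.indicator 1) n x := by
  have hfin (y : X) : s.indicator (1 : X → ℝ≥0∞) y ≠ ∞ := by
    by_cases hy : y ∈ s <;> simp [hy]
  have hreal (y : X) : (s.indicator (1 : X → ℝ≥0∞) y).toReal = s.indicator 1 y := by
    by_cases hy : y ∈ s <;> simp [hy]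
  simp [empiricalMeasure, measureReal_def, birkhoffAverage, birkhoffSum, Measure.dirac_apply,
    ENNReal.toReal_sum fun k _ ↦ hfin _, hreal]

variable [TopologicalSpace X] [OpensMeasurableSpace X] [HasOuterApproxClosed X]

theorem tendsto_birkhoffAverage_indicator_of_null_frontier (μ : Measure X)
    [IsProbabilityMeasure μ] {f : X → X} {x : X}
    (h : ∀ φ : X →ᵇ ℂ, Tendsto (birkhoffAverage ℂ f φ · x) atTop (𝓝 (∫ y, φ y ∂μ)))
    {s : Set X} (hs : μ (frontier s) = 0) :
    Tendsto (birkhoffAverage ℝ f (s.indicator 1) · x) atTop (𝓝 (μ.real s)) := by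
  -- the shift by one makes every empirical measure a probability measure
  let ν (n : ℕ) : ProbabilityMeasure X :=
    ⟨empiricalMeasure f x (n + 1), isProbabilityMeasure_empiricalMeasure f x n.succ_ne_zero⟩
  have hν : Tendsto ν atTop (𝓝 ⟨μ, ‹_›⟩) := by
    refine (ProbabilityMeasure.tendsto_iff_forall_integral_rclike_tendsto ℂ).2 fun φ ↦ ?_
    simpa [ν, integral_empiricalMeasure, birkhoffAverage_congr_ring ℝ ℂ] using
      (tendsto_add_atTop_iff_nat 1).2 (h φ)
  rw [← tendsto_add_atTop_iff_nat 1]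
  simpa [ν, ← measureReal_empiricalMeasure, measureReal_def, Function.comp_def] using
    (ENNReal.tendsto_toReal (measure_ne_top μ s)).comp
      (ProbabilityMeasure.tendsto_measure_of_null_frontier_of_tendsto' hν hs)

end EmpiricalMeasure

namespace AddCircle

variable {T : ℝ}

theorem fourier_comp_add_right (n : ℤ) (a : AddCircle T) :
    ⇑(fourier n) ∘ (· + a) = fourier n a • ⇑(fourier n) := by
  ext y
  simp [fourier_apply, toCircle_add, mul_comm]

theorem image_coe_Icc_subset {a c : ℝ} (hac : a ≤ c) :
    ((↑) : ℝ → AddCircle T) '' Icc a c ⊆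
      (↑) '' Ioo a c ∪ {(a : AddCircle T), (c : AddCircle T)} := by
  rw [← union_sdiff_cancel Ioo_subset_Icc_self, Icc_sdiff_Ioo_same hac, image_union, image_pair]

theorem frontier_image_coe_subset {a c : ℝ} {s : Set ℝ} (h₁ : Ioo a c ⊆ s) (h₂ : s ⊆ Icc a c)
    (hac : a ≤ c) :
    frontier (((↑) : ℝ → AddCircle T) '' s) ⊆ {(a : AddCircle T), (c : AddCircle T)} := by
  have hopen : IsOpen (((↑) : ℝ → AddCircle T) '' Ioo a c) :=
    QuotientAddGroup.isOpenMap_coe _ isOpen_Ioo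
  have hclosed : IsClosed (((↑) : ℝ → AddCircle T) '' Icc a c) :=
    (isCompact_Icc.image (AddCircle.continuous_mk' T)).isClosed
  rintro y ⟨hy_cl, hy_int⟩
  rcases image_coe_Icc_subset hac (closure_minimal (image_mono h₂) hclosed hy_cl) with hy | hy
  · exact absurd (interior_maximal (image_mono h₁) hopen hy) hy_int
  · exact hy

variable [hT : Fact (0 < T)]

instance : NullSingletonClass (volume : Measure (AddCircle T)) :=
  ⟨fun x ↦ by simpa using volume_closedBall T (x := x) 0⟩

theorem volume_image_coe_Ioo {a c : ℝ} (hca : c ≤ a + T) :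
    volume (((↑) : ℝ → AddCircle T) '' Ioo a c) = volume (Ioo a c) := by
  rw [add_projection_respects_measure T a
    (QuotientAddGroup.isOpenMap_coe _ isOpen_Ioo).measurableSet]
  congr 1
  ext t
  constructor
  · rintro ⟨⟨u, hu, hut⟩, ht⟩
    have hu' : u ∈ Ioc a (a + T) := ⟨hu.1, hu.2.le.trans hca⟩
    rwa [← (coe_eq_coe_iff_of_mem_Ioc hu' ht).1 hut]
  · exact fun ht ↦ ⟨mem_image_of_mem _ ht, ht.1, ht.2.le.trans hca⟩

theorem volume_image_coe {a c : ℝ} {s : Set ℝ} (h₁ : Ioo a c ⊆ s) (h₂ : s ⊆ Icc a c)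
    (hac : a ≤ c) (hca : c ≤ a + T) :
    volume (((↑) : ℝ → AddCircle T) '' s) = ENNReal.ofReal (c - a) := by
  rw [← Real.volume_Ioo, ← volume_image_coe_Ioo hca]
  refine le_antisymm ?_ (measure_mono (image_mono h₁))
  calc volume (((↑) : ℝ → AddCircle T) '' s)
      ≤ volume (((↑) : ℝ → AddCircle T) '' Ioo a c ∪ {(a : AddCircle T), (c : AddCircle T)}) :=
        measure_mono ((image_mono h₂).trans (image_coe_Icc_subset hac))
    _ ≤ _ := (measure_union_le _ _).trans (by simp [(toFinite _).measure_zero])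

theorem fourier_ne_one_of_not_isOfFinAddOrder {a : AddCircle T} (ha : ¬IsOfFinAddOrder a) {n : ℤ}
    (hn : n ≠ 0) : fourier n a ≠ 1 := by
  intro h1
  rw [fourier_apply, Circle.coe_eq_one, ← toCircle_zero] at h1
  exact ha (isOfFinAddOrder_iff_zsmul_eq_zero.2 ⟨n, hn, injective_toCircle hT.out.ne' h1⟩)

theorem integral_fourier_haarAddCircle (n : ℤ) :
    ∫ y : AddCircle T, fourier n y ∂haarAddCircle = if n = 0 then 1 else 0 := by
  split_ifs with hn
  · simp [hn]
  · exact integral_eq_zero_of_add_right_eq_neg (fourier_add_half_inv_index hn hT.out)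

theorem tendsto_birkhoffAverage_fourier {a : AddCircle T} (ha : ¬IsOfFinAddOrder a) (n : ℤ)
    (x : AddCircle T) :
    Tendsto (birkhoffAverage ℂ (· + a) (fourier n) · x) atTop
      (𝓝 (∫ y : AddCircle T, fourier n y ∂haarAddCircle)) := by
  rw [integral_fourier_haarAddCircle]
  split_ifs with hn
  · subst hn
    refine tendsto_const_nhds.congr' ((eventually_ne_atTop 0).mono fun N hN ↦ ?_)
    have hinv : ⇑(fourier 0 : C(AddCircle T, ℂ)) ∘ (· + a) = fourier 0 := by ext; simp
    simp [birkhoffAverage_of_comp_eq ℂ hinv (Nat.cast_ne_zero.2 hN)]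
  · exact tendsto_birkhoffAverage_zero_of_comp_eq_smul ℂ (fourier_comp_add_right n a)
      (fourier_ne_one_of_not_isOfFinAddOrder ha hn)
      (isCompact_range (map_continuous _)).isBounded x

theorem tendsto_birkhoffAverage_add_integral {a : AddCircle T} (ha : ¬IsOfFinAddOrder a)
    (g : C(AddCircle T, ℂ)) (x : AddCircle T) :
    Tendsto (birkhoffAverage ℂ (· + a) g · x) atTop (𝓝 (∫ y, g y ∂haarAddCircle)) := by
  let S : Submodule ℂ C(AddCircle T, ℂ) :=
    { carrier := {g | Tendsto (birkhoffAverage ℂ (· + a) g · x) atTop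
        (𝓝 (∫ y, g y ∂haarAddCircle))}
      add_mem' := fun {g h} hg hh ↦ by
        have hint (k : C(AddCircle T, ℂ)) : Integrable k haarAddCircle :=
          k.continuous.integrable_of_hasCompactSupport (.of_compactSpace k)
        simpa [birkhoffAverage_add, integral_add (hint g) (hint h)] using hg.add hh
      zero_mem' := by simp [birkhoffAverage, birkhoffSum]
      smul_mem' := fun c g hg ↦ by
        simpa [birkhoffAverage_smul, integral_const_mul] using hg.const_smul c }
  have hS : IsClosed (S : Set C(AddCircle T, ℂ)) :=
    isClosed_setOf_tendsto_birkhoffAverage_integral ℂ _ _ x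
  have hspan : Submodule.span ℂ (range fourier) ≤ S :=
    Submodule.span_le.2 <| range_subset_iff.2 fun n ↦ tendsto_birkhoffAverage_fourier ha n x
  have := Submodule.topologicalClosure_minimal _ hspan hS
  rw [span_fourier_closure_eq_top] at this
  exact this Submodule.mem_top

end AddCircle

namespace UnitAddCircle

instance : IsProbabilityMeasure (volume : Measure UnitAddCircle) :=
  ⟨UnitAddCircle.measure_univ⟩

theorem haarAddCircle_eq_volume :
    (AddCircle.haarAddCircle : Measure UnitAddCircle) = volume := by
  simp [AddCircle.volume_eq_smul_haarAddCircle]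

theorem not_isOfFinAddOrder_coe_iff {x : ℝ} :
    ¬IsOfFinAddOrder (x : UnitAddCircle) ↔ Irrational x := by
  simp [AddCircle.not_isOfFinAddOrder_iff_forall_rat_ne_div, Irrational]

theorem coe_mem_image_coe_Ico_iff {a c : ℝ} (ha : 0 ≤ a) (hc : c ≤ 1) (y : ℝ) :
    (y : UnitAddCircle) ∈ ((↑) : ℝ → UnitAddCircle) '' Ico a c ↔ Int.fract y ∈ Ico a c := by
  constructor
  · rintro ⟨t, ht, hty⟩
    rw [← AddCircle.coe_fract y] at hty
    have ht' : t ∈ Ico 0 (0 + 1) := ⟨ha.trans ht.1, by linarith [ht.2]⟩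
    have hy : Int.fract y ∈ Ico 0 (0 + 1) := ⟨Int.fract_nonneg y, by simpa using Int.fract_lt_one y⟩
    rwa [← (AddCircle.coe_eq_coe_iff_of_mem_Ico ht' hy).1 hty]
  · exact fun h ↦ ⟨_, h, AddCircle.coe_fract y⟩

end UnitAddCircle

theorem Nat.squarefree_ten : Squarefree 10 := by
  rw [show (10 : ℕ) = 2 * 5 from rfl, Nat.squarefree_mul_iff]
  exact ⟨by norm_num, Nat.prime_two.prime.squarefree, Nat.prime_five.prime.squarefree⟩

theorem Nat.exists_eq_pow_of_pow_eq_pow_of_squarefree {b m p q : ℕ} (hm : Squarefree m)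
    (hm1 : m ≠ 1) (hq : q ≠ 0) (h : b ^ q = m ^ p) : ∃ k, b = m ^ k := by
  obtain ⟨c, hb, hmc⟩ := Nat.exists_eq_pow_of_pow_eq_pow (Or.inl hq) h
  refine ⟨p / q.gcd p, ?_⟩
  suffices c = m by rwa [← this]
  rcases Nat.lt_trichotomy (q / q.gcd p) 1 with he | he | he
  · simp [Nat.lt_one_iff.1 he] at hmc
    exact absurd hmc hm1
  · simpa [he] using hmc.symm
  · have hc : IsUnit c := hm c (hmc ▸ by simpa [sq] using pow_dvd_pow c he)
    simp [Nat.isUnit_iff.1 hc] at hmc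
    exact absurd hmc hm1

theorem irrational_logb_natCast {m b : ℕ} (hm : Squarefree m) (hm1 : 1 < m) (hb : 0 < b)
    (h : ∀ k, b ≠ m ^ k) : Irrational (logb m b) := by
  rintro ⟨q, hq⟩
  have hm1' : (1 : ℝ) < m := by exact_mod_cast hm1
  have hq0 : 0 ≤ q := by
    exact_mod_cast hq ▸ logb_nonneg hm1' (by exact_mod_cast hb)
  have hexp : (q : ℝ) * q.den = q.num.toNat := by
    have hnum : (q.num.toNat : ℝ) = q.num := by
      exact_mod_cast Int.toNat_of_nonneg (Rat.num_nonneg.2 hq0)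
    rw [hnum]
    exact_mod_cast Rat.mul_den_eq_num q
  have hpow : (b : ℝ) ^ q.den = (m : ℝ) ^ q.num.toNat := by
    rw [← rpow_logb (x := b) (by linarith) hm1'.ne' (by exact_mod_cast hb), ← hq, ← rpow_natCast,
      ← rpow_mul (by linarith), hexp, rpow_natCast]
  obtain ⟨k, hk⟩ := Nat.exists_eq_pow_of_pow_eq_pow_of_squarefree hm hm1.ne' q.den_ne_zero
    (by exact_mod_cast hpow)
  exact h k hk

theorem div_zpow_floor_logb_eq_rpow_fract {B x : ℝ} (hB : 0 < B) (hB1 : B ≠ 1) (hx : 0 < x) :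
    x / B ^ ⌊logb B x⌋ = B ^ Int.fract (logb B x) := by
  nth_rewrite 1 [← rpow_logb hB hB1 hx]
  rw [← rpow_intCast, ← rpow_sub hB, Int.fract]

theorem floor_div_zpow_floor_logb_eq_iff {B x : ℝ} (hB : 1 < B) (hx : 0 < x) {d : ℕ}
    (hd : 0 < d) :
    ⌊x / B ^ ⌊logb B x⌋⌋ = d ↔ Int.fract (logb B x) ∈ Ico (logb B d) (logb B (d + 1)) := by
  rw [div_zpow_floor_logb_eq_rpow_fract (by linarith) hB.ne' hx, Int.floor_eq_iff, mem_Ico,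
    logb_le_iff_le_rpow hB (by positivity), lt_logb_iff_rpow_lt hB (by positivity)]
  push_cast
  rfl

noncomputable def digitArc (B : ℝ) (d : ℕ) : Set UnitAddCircle :=
  ((↑) : ℝ → UnitAddCircle) '' Ico (logb B d) (logb B (d + 1))

section digitArc

variable {B : ℝ} {d : ℕ}

theorem logb_digit_bounds (hB : 1 < B) (hd : 0 < d) (hdB : (d : ℝ) + 1 ≤ B) :
    0 ≤ logb B d ∧ logb B d ≤ logb B (d + 1) ∧ logb B (d + 1) ≤ 1 := by
  have hd' : (1 : ℝ) ≤ d := by exact_mod_cast hd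
  refine ⟨logb_nonneg hB hd', logb_le_logb_of_le hB (by linarith) (by linarith), ?_⟩
  exact (logb_le_logb_of_le hB (by linarith) hdB).trans_eq (logb_self_eq_one hB)

theorem floor_div_zpow_floor_logb_pow_eq_iff_mem_digitArc (hB : 1 < B) (hd : 0 < d)
    (hdB : (d : ℝ) + 1 ≤ B) {y : ℝ} (hy : 0 < y) (n : ℕ) :
    ⌊y ^ n / B ^ ⌊logb B (y ^ n)⌋⌋ = d ↔ n • (logb B y : UnitAddCircle) ∈ digitArc B d := by
  obtain ⟨ha, -, hc⟩ := logb_digit_bounds hB hd hdB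
  rw [floor_div_zpow_floor_logb_eq_iff hB (by positivity) hd, digitArc, ← AddCircle.coe_nsmul,
    UnitAddCircle.coe_mem_image_coe_Ico_iff ha hc, logb_pow, nsmul_eq_mul]

theorem volume_frontier_digitArc (hB : 1 < B) (hd : 0 < d) (hdB : (d : ℝ) + 1 ≤ B) :
    volume (frontier (digitArc B d)) = 0 :=
  measure_mono_null (AddCircle.frontier_image_coe_subset Ioo_subset_Ico_self Ico_subset_Icc_self
    (logb_digit_bounds hB hd hdB).2.1) ((toFinite _).measure_zero _)

theorem measureReal_digitArc (hB : 1 < B) (hd : 0 < d) (hdB : (d : ℝ) + 1 ≤ B) :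
    volume.real (digitArc B d) = logb B (1 + 1 / d) := by
  obtain ⟨ha, hac, hc⟩ := logb_digit_bounds hB hd hdB
  have hd' : (0 : ℝ) < d := by exact_mod_cast hd
  rw [measureReal_def, digitArc, AddCircle.volume_image_coe Ioo_subset_Ico_self
    Ico_subset_Icc_self hac (by linarith), ENNReal.toReal_ofReal (sub_nonneg.2 hac),
    ← logb_div (by positivity) hd'.ne']
  congr 1
  field_simp

end digitArc

/-- If `b > 1` is an integer not a power of 10, then `(b^n)` satisfies
Benford's law: the natural density of `{n : first significant digit of b^n = d}` is
`log₁₀(1 + 1/d)` for each `d ∈ {1, …, 9}`. -/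
theorem benford_law_for_powers (b : ℕ) (hb : 2 ≤ b) (h : ∀ k : ℕ, 1 ≤ k → b ≠ 10 ^ k)
    (d : ℕ) (hd : d ∈ Finset.Icc 1 9) :
    Filter.Tendsto (fun N : ℕ =>
      (((Finset.Icc 1 N).filter fun n : ℕ =>
        ⌊(b : ℝ) ^ n / (10 : ℝ) ^ (⌊Real.logb 10 ((b : ℝ) ^ n)⌋ : ℤ)⌋ = (d : ℤ)).card : ℝ) / N)
      Filter.atTop (nhds (Real.logb 10 (1 + 1 / d))) := by
  obtain ⟨hd1, hd9⟩ := Finset.mem_Icc.1 hd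
  have hd10 : (d : ℝ) + 1 ≤ 10 := by exact_mod_cast (by omega : d + 1 ≤ 10)
  set α : UnitAddCircle := ↑(logb 10 (b : ℝ))
  have hα : ¬IsOfFinAddOrder α :=
    UnitAddCircle.not_isOfFinAddOrder_coe_iff.2 <|
      irrational_logb_natCast Nat.squarefree_ten (by norm_num) (by omega) fun k ↦ by
        rcases k with _ | k
        · simp; omega
        · exact h _ (by omega)
  have hlim := tendsto_birkhoffAverage_indicator_of_null_frontier volume (f := (· + α)) (x := α)
    (fun φ ↦ by
      simpa [UnitAddCircle.haarAddCircle_eq_volume] using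
        AddCircle.tendsto_birkhoffAverage_add_integral hα φ.toContinuousMap α)
    (volume_frontier_digitArc (by norm_num) hd1 hd10)
  rw [measureReal_digitArc (by norm_num) hd1 hd10] at hlim
  classical
  convert hlim using 2 with N
  rw [birkhoffAverage_add_right_self_indicator, Finset.filter_congr fun n _ ↦
    floor_div_zpow_floor_logb_pow_eq_iff_mem_digitArc (by norm_num) hd1 hd10 (by positivity) n]
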